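/- arXiv:2310.02796 — 5 statements merged into one kernel-verified Lean document; each statement's English description precedes it below -/
import Mathlib

section
/- Let φ: ℤ⁺ → ℂ be periodic with period m, let f(n) := ∏_{i=1}^{n} φ(i), let g: ℤ⁺ → ℂ be periodic with period m, and define F(n) := ∑_{j=1}^{n} f(j)·g(j). If |f(m)| < 1, then the limit F(∞) := lim_{n→∞} F(n) exists and equals F(m)/(1 − f(m)). -/
/-!
Periodicity of `φ` makes `f` multiplicative across one period, `f (m + n) = f m * f n`, and hence
`F (m + n) = F m + f m * F n`. Thus `F n - L`, with `L = F m / (1 - f m)` the fixed point of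
`x ↦ F m + f m * x`, gets multiplied by `f m` at every shift by `m`, so it decays geometrically.
-/

open Filter Finset

@[to_additive Finset.sum_Icc_one_add]
theorem Finset.prod_Icc_one_add {M : Type*} [CommMonoid M] (u : ℕ → M) (m n : ℕ) :
    ∏ i ∈ Icc 1 (m + n), u i = (∏ i ∈ Icc 1 m, u i) * ∏ i ∈ Icc 1 n, u (m + i) := by
  induction n with
  | zero => simp
  | succ n ih =>
    rw [← add_assoc, prod_Icc_succ_top (by omega), ih, prod_Icc_succ_top (by omega), mul_assoc,
      add_assoc]

theorem add_period_eq_of_periodic_on_Icc {α : Type*} {m : ℕ} {φ : ℕ → α}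
    (hφ : ∀ j r : ℕ, 1 ≤ r → r ≤ m → φ (m * j + r) = φ r) {i : ℕ} (hi : 1 ≤ i) :
    φ (m + i) = φ i := by
  rcases Nat.eq_zero_or_pos m with rfl | hm
  · rw [zero_add]
  obtain ⟨j, r, hr1, hrm, rfl⟩ : ∃ j r, 1 ≤ r ∧ r ≤ m ∧ i = m * j + r :=
    ⟨(i - 1) / m, (i - 1) % m + 1, by omega, Nat.mod_lt _ hm, by
      have := Nat.div_add_mod (i - 1) m; omega⟩
  rw [hφ j r hr1 hrm, ← hφ (j + 1) r hr1 hrm]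
  ring_nf

theorem tendsto_zero_of_add_eq_smul {𝕜 E : Type*} [NormedField 𝕜] [NormedAddCommGroup E]
    [NormedSpace 𝕜 E] {u : ℕ → E} {m : ℕ} (hm : m ≠ 0) {c : 𝕜} (hc : ‖c‖ < 1)
    (hu : ∀ n, u (m + n) = c • u n) : Tendsto u atTop (nhds 0) := by
  have hmul : ∀ k n, u (m * k + n) = c ^ k • u n := by
    intro k
    induction k with
    | zero => simp
    | succ k ih =>
      intro n
      rw [mul_add_one, add_comm (m * k), add_assoc, hu, ih, pow_succ', mul_smul]
  set B := ∑ r ∈ range m, ‖u r‖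
  have hbound : ∀ n, ‖u n‖ ≤ ‖c‖ ^ (n / m) * B := by
    intro n
    rw [← Nat.div_add_mod n m, hmul, norm_smul, norm_pow, Nat.mul_add_div (Nat.pos_of_ne_zero hm),
      Nat.mod_div_self, add_zero]
    gcongr
    exact single_le_sum (fun r _ => norm_nonneg (u r))
      (mem_range.mpr (Nat.mod_lt n (Nat.pos_of_ne_zero hm)))
  have hgeom : Tendsto (fun n => ‖c‖ ^ (n / m) * B) atTop (nhds 0) := by
    simpa using ((tendsto_pow_atTop_nhds_zero_of_lt_one (norm_nonneg c) hc).comp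
      (Nat.tendsto_div_const_atTop hm)).mul_const B
  exact squeeze_zero_norm hbound hgeom

theorem tendsto_of_add_eq_add_mul {𝕜 : Type*} [NormedField 𝕜] {F : ℕ → 𝕜} {m : ℕ} (hm : m ≠ 0)
    {c : 𝕜} (hc : ‖c‖ < 1) (hF : ∀ n, F (m + n) = F m + c * F n) :
    Tendsto F atTop (nhds (F m / (1 - c))) := by
  have hc1 : 1 - c ≠ 0 := sub_ne_zero.mpr fun h => by simp [← h] at hc
  rw [← tendsto_sub_nhds_zero_iff]
  refine tendsto_zero_of_add_eq_smul hm hc fun n => ?_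
  rw [hF, smul_eq_mul]
  field_simp
  ring

theorem periodic_summatory_limit_general (m : ℕ) (φ g : ℕ → ℂ)
    (hφ : ∀ j r : ℕ, 1 ≤ r → r ≤ m → φ (m * j + r) = φ r)
    (hg : ∀ j r : ℕ, 1 ≤ r → r ≤ m → g (m * j + r) = g r)
    (f F : ℕ → ℂ)
    (hf : ∀ n, f n = ∏ i ∈ Finset.Icc 1 n, φ i)
    (hF : ∀ n, F n = ∑ j ∈ Finset.Icc 1 n, f j * g j)
    (h1 : ‖f m‖ < 1) :
    Tendsto F atTop (nhds (F m / (1 - f m))) := by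
  have hm : m ≠ 0 := by
    rintro rfl
    simp [hf] at h1
  have hf_add : ∀ n, f (m + n) = f m * f n := fun n => by
    rw [hf, hf, hf, prod_Icc_one_add]
    congr 1
    exact prod_congr rfl fun i hi => add_period_eq_of_periodic_on_Icc hφ (mem_Icc.mp hi).1
  refine tendsto_of_add_eq_add_mul hm h1 fun n => ?_
  rw [hF, hF, hF, sum_Icc_one_add, mul_sum]
  congr 1
  refine sum_congr rfl fun i hi => ?_
  rw [hf_add, add_period_eq_of_periodic_on_Icc hg (mem_Icc.mp hi).1, mul_assoc]

/-- If `φ, g : ℤ⁺ → ℂ` are periodic with period `m`, `f(n) = ∏_{i=1}^n φ(i)`,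
`F(n) = ∑_{j=1}^n f(j) g(j)`, and `|f(m)| < 1`, then `F(∞) = lim_n F(n)` exists and equals
`F(m)/(1 - f(m))`. -/
theorem periodic_summatory_limit (m : ℕ) (hm : 1 ≤ m) (φ g : ℕ → ℂ)
    (hφ : ∀ j r : ℕ, 1 ≤ r → r ≤ m → φ (m * j + r) = φ r)
    (hg : ∀ j r : ℕ, 1 ≤ r → r ≤ m → g (m * j + r) = g r)
    (f F : ℕ → ℂ)
    (hf : ∀ n, f n = ∏ i ∈ Finset.Icc 1 n, φ i)
    (hF : ∀ n, F n = ∑ j ∈ Finset.Icc 1 n, f j * g j)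
    (h1 : ‖f m‖ < 1) :
    Tendsto F atTop (nhds (F m / (1 - f m))) :=
  periodic_summatory_limit_general m φ g hφ hg f F hf hF h1
end

section
/- For complex numbers z and q with |q| < 1/(1+|z|), one has the partition-indexed expansion 1/{zq;q}_∞ = ∑_{λ ∈ P} z^{ℓ(λ)} q^{|λ|} / ∏_{i∈λ} {zq;q}_{i−1}, where the sum is over all integer partitions λ (including the empty partition), ℓ(λ) is the number of parts, |λ| the sum of parts, and the product over parts i of λ counted with multiplicity. -/
/-!
With `w a = z q^a / {zq;q}_{a-1}`, the summand of a partition `λ` is `∏_{a ∈ λ} w a`, so the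
series is the Euler product `∏_{a ≥ 1} (1 - w a)⁻¹`. Since `1 - w a = {zq;q}_a / {zq;q}_{a-1}`,
its partial products telescope to `{zq;q}_N⁻¹ → {zq;q}_∞⁻¹`.

Absolute convergence comes from the same computation with `‖z‖, ‖q‖` in place of `z, q`:
`‖{zq;q}_m‖ ≥ {‖z‖‖q‖;‖q‖}_m ≥ {‖z‖‖q‖;‖q‖}_∞ > 0`, the last inequality being the hypothesis
`‖q‖ < 1/(1+‖z‖)`. Hence `‖w a‖` is dominated by the weight built from `‖z‖, ‖q‖`, and the finite
Euler products of those weights telescope as well, so they are bounded by `{‖z‖‖q‖;‖q‖}_∞⁻¹`.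
-/

/-- The composition-theoretic symbol `{zq;q}_m = 1 - ∑_{i=1}^m z q^i`. -/
noncomputable def cbrk (z q : ℂ) (m : ℕ) : ℂ := 1 - ∑ i ∈ Finset.Icc 1 m, z * q ^ i

open Filter Topology

section EulerProduct

variable {ι : Type*}

def multisetsOn (s : Finset ι) : Set (Multiset ι) := {μ | ∀ a ∈ μ, a ∈ s}

def multisetsOnInsertEquiv [DecidableEq ι] {a : ι} {s : Finset ι} (ha : a ∉ s) :
    ℕ × multisetsOn s ≃ multisetsOn (insert a s) where
  toFun p := ⟨.replicate p.1 a + p.2, fun b hb => by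
    rcases Multiset.mem_add.1 hb with hb | hb
    · exact Finset.mem_insert.2 (.inl (Multiset.eq_of_mem_replicate hb))
    · exact Finset.mem_insert_of_mem (p.2.2 b hb)⟩
  invFun μ := (μ.1.count a, ⟨μ.1.filter (· ≠ a), fun b hb => by
    obtain ⟨hbμ, hba⟩ := Multiset.mem_filter.1 hb
    exact (Finset.mem_insert.1 (μ.2 b hbμ)).resolve_left hba⟩)
  left_inv := by
    rintro ⟨n, μ, hμ⟩
    have haμ : a ∉ μ := fun h => ha (hμ a h)
    refine Prod.ext ?_ (Subtype.ext ?_)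
    · simp [Multiset.count_eq_zero.2 haμ]
    · dsimp only
      rw [Multiset.filter_add, Multiset.filter_eq_nil.2 fun b hb => by
        simp [Multiset.eq_of_mem_replicate hb], zero_add]
      exact Multiset.filter_eq_self.2 fun b hb hba => haμ (hba ▸ hb)
  right_inv μ := Subtype.ext <| by
    simpa [← Multiset.filter_eq'] using Multiset.filter_add_not (· = a) μ.1

variable {𝕜 : Type*} [NormedField 𝕜] [CompleteSpace 𝕜]

theorem summable_norm_and_hasSum_prod_map_multisetsOn {x : ι → 𝕜} {s : Finset ι}
    (hx : ∀ a ∈ s, ‖x a‖ < 1) :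
    (Summable fun μ : multisetsOn s => ‖(μ.1.map x).prod‖) ∧
      HasSum (fun μ : multisetsOn s => (μ.1.map x).prod) (∏ a ∈ s, (1 - x a)⁻¹) := by
  classical
  induction s using Finset.induction_on with
  | empty =>
    let : Unique (multisetsOn (∅ : Finset ι)) :=
      { default := ⟨0, by simp [multisetsOn]⟩
        uniq := fun μ => Subtype.ext <| Multiset.eq_zero_of_forall_notMem fun b hb => by
          simpa using μ.2 b hb }
    refine ⟨.of_finite, ?_⟩
    convert hasSum_fintype fun μ : multisetsOn (∅ : Finset ι) => (μ.1.map x).prod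
    rw [Fintype.sum_unique, Finset.prod_empty]
    rfl
  | @insert a s ha ih =>
    obtain ⟨ih_norm, ih_sum⟩ := ih fun b hb => hx b (Finset.mem_insert_of_mem hb)
    have hxa : ‖x a‖ < 1 := hx a (Finset.mem_insert_self a s)
    have hgeom_norm : Summable fun n : ℕ => ‖x a ^ n‖ := by
      simpa [norm_pow] using summable_geometric_of_lt_one (norm_nonneg _) hxa
    have hterm : ∀ p : ℕ × multisetsOn s,
        ((multisetsOnInsertEquiv ha p).1.map x).prod = x a ^ p.1 * (p.2.1.map x).prod := by
      rintro ⟨n, μ⟩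
      show ((Multiset.replicate n a + μ.1).map x).prod = _
      simp
    rw [← (multisetsOnInsertEquiv ha).summable_iff, ← (multisetsOnInsertEquiv ha).hasSum_iff,
      Finset.prod_insert ha]
    simp only [Function.comp_def, hterm]
    have hsummable_norm := Summable.mul_norm hgeom_norm ih_norm
    have hsummable :=
      summable_mul_of_summable_norm (f := fun n : ℕ => x a ^ n) hgeom_norm ih_norm
    have hhasSum := (hasSum_geometric_of_norm_lt_one hxa).mul ih_sum hsummable
    exact ⟨hsummable_norm, hhasSum⟩

theorem summable_prod_map_of_forall_prod_inv_one_sub_le {y : ι → ℝ} {C : ℝ}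
    (hy₀ : ∀ a, 0 ≤ y a) (hy₁ : ∀ a, y a < 1) (hC : ∀ s : Finset ι, ∏ a ∈ s, (1 - y a)⁻¹ ≤ C) :
    Summable fun μ : Multiset ι => (μ.map y).prod := by
  classical
  have hnonneg : ∀ μ : Multiset ι, 0 ≤ (μ.map y).prod := fun μ =>
    Multiset.prod_nonneg fun b hb => by
      obtain ⟨a, -, rfl⟩ := Multiset.mem_map.1 hb
      exact hy₀ a
  refine summable_of_sum_le (c := C) hnonneg fun u => ?_
  set s := u.sup Multiset.toFinset
  have hu : ∀ μ ∈ u, μ ∈ multisetsOn s := fun μ hμ a ha =>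
    Finset.le_sup (f := Multiset.toFinset) hμ (Multiset.mem_toFinset.2 ha)
  have hsum := (summable_norm_and_hasSum_prod_map_multisetsOn (x := y) (s := s) fun a _ => by
    rw [Real.norm_of_nonneg (hy₀ a)]; exact hy₁ a).2
  calc ∑ μ ∈ u, (μ.map y).prod
      = ∑ μ ∈ u.subtype (· ∈ multisetsOn s), (μ.1.map y).prod :=
        (Finset.sum_subtype_of_mem _ hu).symm
    _ ≤ ∏ a ∈ s, (1 - y a)⁻¹ := sum_le_hasSum _ (fun μ _ => hnonneg μ) hsum
    _ ≤ C := hC s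

theorem Summable.tendsto_tsum_multisetsOn {G : Type*} [AddCommGroup G] [UniformSpace G]
    [IsUniformAddGroup G] [CompleteSpace G] [T2Space G] {F : Multiset ι → G} (hF : Summable F) :
    Tendsto (fun s : Finset ι => ∑' μ : multisetsOn s, F μ) atTop (𝓝 (∑' μ, F μ)) := by
  classical
  have hcompl : Tendsto (fun s : Finset ι => ∑' μ : ↑(multisetsOn s)ᶜ, F μ) atTop (𝓝 0) := by
    refine tendsto_iff_forall_eventually_mem.2 fun e he => ?_
    obtain ⟨u, hu⟩ := hF.tsum_vanishing he
    filter_upwards [eventually_ge_atTop (u.sup Multiset.toFinset)] with s hs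
    refine hu _ (Set.disjoint_left.2 fun μ hμ hμu => hμ fun a ha => hs ?_)
    exact Finset.le_sup (f := Multiset.toFinset) hμu (Multiset.mem_toFinset.2 ha)
  have hlim := (tendsto_const_nhds (x := ∑' μ, F μ)).sub hcompl
  rw [sub_zero] at hlim
  refine hlim.congr fun s => ?_
  rw [← hF.tsum_subtype_add_tsum_subtype_compl (multisetsOn s), add_sub_cancel_right]

theorem hasProd_inv_one_sub_tsum_prod_map {x : ι → 𝕜} (hx : ∀ a, ‖x a‖ < 1)
    (hsum : Summable fun μ : Multiset ι => ‖(μ.map x).prod‖) :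
    HasProd (fun a => (1 - x a)⁻¹) (∑' μ : Multiset ι, (μ.map x).prod) := by
  refine hsum.of_norm.tendsto_tsum_multisetsOn.congr fun s => ?_
  exact (summable_norm_and_hasSum_prod_map_multisetsOn fun a _ => hx a).2.tsum_eq

end EulerProduct

section Bracket

variable {K : Type*}

/-- `cbrk` over an arbitrary commutative ring: the real instance `bracket ‖z‖ ‖q‖` bounds
`‖cbrk z q‖` from below. -/
def bracket [CommRing K] (z q : K) (m : ℕ) : K := 1 - ∑ i ∈ Finset.Icc 1 m, z * q ^ i

theorem cbrk_eq_bracket : cbrk = bracket := rfl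

def weight [Field K] (z q : K) (a : ℕ+) : K := z * q ^ (a : ℕ) / bracket z q ((a : ℕ) - 1)

def partsUpTo (N : ℕ) : Finset ℕ+ := (Finset.range N).map ⟨Nat.succPNat, Nat.succPNat_injective⟩

theorem mem_partsUpTo {a : ℕ+} {N : ℕ} : a ∈ partsUpTo N ↔ (a : ℕ) ≤ N := by
  simp only [partsUpTo, Finset.mem_map, Finset.mem_range, Function.Embedding.coeFn_mk]
  constructor
  · rintro ⟨n, hn, rfl⟩
    exact hn
  · exact fun ha => ⟨a.natPred, by have := a.pos; simp only [PNat.natPred]; omega,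
      a.succPNat_natPred⟩

theorem prod_partsUpTo {M : Type*} [CommMonoid M] (f : ℕ+ → M) (N : ℕ) :
    ∏ a ∈ partsUpTo N, f a = ∏ n ∈ Finset.range N, f n.succPNat :=
  Finset.prod_map _ _ _

theorem tendsto_partsUpTo : Tendsto partsUpTo atTop atTop :=
  tendsto_atTop_finset_of_monotone
    (fun _ _ hmn _ ha => mem_partsUpTo.2 ((mem_partsUpTo.1 ha).trans hmn))
    fun a => ⟨a, mem_partsUpTo.2 le_rfl⟩

section CommRing

variable [CommRing K] (z q : K)

theorem bracket_zero : bracket z q 0 = 1 := by simp [bracket]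

theorem bracket_succ (m : ℕ) : bracket z q (m + 1) = bracket z q m - z * q ^ (m + 1) := by
  rw [bracket, bracket, Finset.sum_Icc_succ_top (by omega)]
  ring

theorem bracket_eq_one_sub_mul_geom_sum (m : ℕ) :
    bracket z q m = 1 - z * q * ∑ i ∈ Finset.range m, q ^ i := by
  induction m with
  | zero => simp [bracket_zero]
  | succ m ih => rw [bracket_succ, ih, Finset.sum_range_succ]; ring

end CommRing

section Field

variable [Field K] (z q : K)

theorem prod_map_weight (μ : Multiset ℕ+) :
    (μ.map (weight z q)).prod = z ^ Multiset.card μ * q ^ (μ.map fun i => (i : ℕ)).sum /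
      (μ.map fun i => bracket z q ((i : ℕ) - 1)).prod := by
  -- `μ.map fun i => (i : ℕ)` elaborates as a map over the monadic coercion of `μ` to
  -- `Multiset ℕ`, i.e. a `bind`.
  simp only [Multiset.pure_def, Multiset.bind_def, Multiset.bind_singleton, Multiset.map_map,
    Function.comp_def]
  induction μ using Multiset.induction_on with
  | empty => simp
  | cons a μ ih =>
    simp only [Multiset.map_cons, Multiset.prod_cons, Multiset.sum_cons, Multiset.card_cons, ih,
      weight, pow_add, pow_succ]
    ring

theorem bracket_mul_one_sub_weight {n : ℕ} (h : bracket z q n ≠ 0) :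
    bracket z q n * (1 - weight z q n.succPNat) = bracket z q (n + 1) := by
  rw [weight, Nat.succPNat_coe, Nat.succ_sub_one, bracket_succ]
  field_simp

theorem prod_one_sub_weight {N : ℕ} (h : ∀ n < N, bracket z q n ≠ 0) :
    ∏ n ∈ Finset.range N, (1 - weight z q n.succPNat) = bracket z q N := by
  induction N with
  | zero => simp [bracket_zero]
  | succ N ih =>
    rw [Finset.prod_range_succ, ih fun n hn => h n (by omega),
      bracket_mul_one_sub_weight z q (h N (by omega))]

end Field

section Real

variable {Z t : ℝ}

theorem sub_sub_mul_div_one_sub_le_bracket (hZ : 0 ≤ Z) (ht₀ : 0 ≤ t) (ht₁ : t < 1) (m : ℕ) :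
    (1 - t - Z * t) / (1 - t) ≤ bracket Z t m := by
  have hgeom : ∑ i ∈ Finset.range m, t ^ i ≤ (1 - t)⁻¹ := by
    simpa [← Finset.range_eq_Ico] using geom_sum_Ico_le_of_lt_one (m := 0) (n := m) ht₀ ht₁
  calc (1 - t - Z * t) / (1 - t) = 1 - Z * t * (1 - t)⁻¹ := by
        field_simp [(sub_pos.2 ht₁).ne']
    _ ≤ bracket Z t m := by
        rw [bracket_eq_one_sub_mul_geom_sum]
        gcongr

theorem weight_mem_Ico (hZ : 0 ≤ Z) (ht : 0 ≤ t) (hD : ∀ m, 0 < bracket Z t m) (a : ℕ+) :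
    weight Z t a ∈ Set.Ico 0 1 := by
  obtain ⟨n, rfl⟩ : ∃ n, n.succPNat = a := ⟨a.natPred, a.succPNat_natPred⟩
  refine ⟨div_nonneg (by positivity) (hD _).le, sub_pos.1 ?_⟩
  have := bracket_mul_one_sub_weight Z t (hD n).ne'
  exact pos_of_mul_pos_right (this ▸ hD (n + 1)) (hD n).le

theorem prod_inv_one_sub_weight_le {c : ℝ} (hZ : 0 ≤ Z) (ht : 0 ≤ t) (hc : 0 < c)
    (hD : ∀ m, c ≤ bracket Z t m) (s : Finset ℕ+) :
    ∏ a ∈ s, (1 - weight Z t a)⁻¹ ≤ c⁻¹ := by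
  have hD₀ : ∀ m, 0 < bracket Z t m := fun m => hc.trans_le (hD m)
  have hfactor : ∀ a : ℕ+, 1 ≤ (1 - weight Z t a)⁻¹ := fun a => by
    obtain ⟨hW₀, hW₁⟩ := weight_mem_Ico hZ ht hD₀ a
    rw [one_le_inv₀ (sub_pos.2 hW₁)]
    linarith
  obtain ⟨N, hN⟩ : ∃ N, s ⊆ partsUpTo N :=
    ⟨s.sup (↑), fun a ha => mem_partsUpTo.2 (Finset.le_sup (f := ((↑) : ℕ+ → ℕ)) ha)⟩
  calc ∏ a ∈ s, (1 - weight Z t a)⁻¹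
      ≤ ∏ a ∈ partsUpTo N, (1 - weight Z t a)⁻¹ :=
        Finset.prod_le_prod_of_subset_of_one_le hN (fun a _ => zero_le_one.trans (hfactor a))
          fun a _ _ => hfactor a
    _ = (bracket Z t N)⁻¹ := by
        rw [prod_partsUpTo, Finset.prod_inv_distrib,
          prod_one_sub_weight Z t fun n _ => (hD₀ n).ne']
    _ ≤ c⁻¹ := inv_anti₀ hc (hD N)

end Real

section NormedField

variable [NormedField K] (z q : K)

theorem bracket_norm_le_norm_bracket (m : ℕ) : bracket ‖z‖ ‖q‖ m ≤ ‖bracket z q m‖ := by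
  rw [bracket_eq_one_sub_mul_geom_sum, bracket_eq_one_sub_mul_geom_sum]
  have hsum : ‖z * q * ∑ i ∈ Finset.range m, q ^ i‖ ≤
      ‖z‖ * ‖q‖ * ∑ i ∈ Finset.range m, ‖q‖ ^ i := by
    rw [norm_mul, norm_mul]
    gcongr
    exact (norm_sum_le _ _).trans_eq (by simp [norm_pow])
  calc 1 - ‖z‖ * ‖q‖ * ∑ i ∈ Finset.range m, ‖q‖ ^ i
      ≤ ‖(1 : K)‖ - ‖z * q * ∑ i ∈ Finset.range m, q ^ i‖ := by rw [norm_one]; linarith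
    _ ≤ _ := norm_sub_norm_le _ _

theorem norm_weight_le {a : ℕ+} (h : 0 < bracket ‖z‖ ‖q‖ ((a : ℕ) - 1)) :
    ‖weight z q a‖ ≤ weight ‖z‖ ‖q‖ a := by
  rw [weight, weight, norm_div, norm_mul, norm_pow]
  exact div_le_div_of_nonneg_left (by positivity) h (bracket_norm_le_norm_bracket z q _)

theorem tendsto_bracket [CompleteSpace K] (hq : ‖q‖ < 1) :
    Tendsto (bracket z q) atTop (𝓝 ((1 - q - z * q) / (1 - q))) := by
  have hq₁ : 1 - q ≠ 0 := fun h => by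
    rw [← sub_eq_zero.1 h, norm_one] at hq
    exact lt_irrefl _ hq
  have hlim :=
    (((hasSum_geometric_of_norm_lt_one hq).tendsto_sum_nat).const_mul (z * q)).const_sub 1
  convert hlim using 1
  · exact funext (bracket_eq_one_sub_mul_geom_sum z q)
  · field_simp

variable {z q} {c : ℝ} (hc : 0 < c) (hD : ∀ m, c ≤ bracket ‖z‖ ‖q‖ m)
include hc hD

theorem tendsto_inv_bracket [CompleteSpace K] (hq : ‖q‖ < 1) :
    Tendsto (fun N => (bracket z q N)⁻¹) atTop (𝓝 ((1 - q) / (1 - q - z * q))) := by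
  have hbracket := tendsto_bracket z q hq
  have hlim_norm := ge_of_tendsto' hbracket.norm fun m =>
    (hD m).trans (bracket_norm_le_norm_bracket z q m)
  rw [← inv_div]
  exact hbracket.inv₀ (norm_pos_iff.1 (hc.trans_le hlim_norm))

theorem bracket_ne_zero (m : ℕ) : bracket z q m ≠ 0 :=
  norm_pos_iff.1 ((hc.trans_le (hD m)).trans_le (bracket_norm_le_norm_bracket z q m))

theorem norm_weight_lt_one (a : ℕ+) : ‖weight z q a‖ < 1 :=
  (norm_weight_le z q (hc.trans_le (hD _))).trans_lt
    (weight_mem_Ico (norm_nonneg z) (norm_nonneg q) (fun m => hc.trans_le (hD m)) a).2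

theorem summable_norm_prod_map_weight :
    Summable fun μ : Multiset ℕ+ => ‖(μ.map (weight z q)).prod‖ := by
  have hW := weight_mem_Ico (norm_nonneg z) (norm_nonneg q) fun m => hc.trans_le (hD m)
  refine (summable_prod_map_of_forall_prod_inv_one_sub_le (fun a => (hW a).1) (fun a => (hW a).2)
    (prod_inv_one_sub_weight_le (norm_nonneg z) (norm_nonneg q) hc hD)).of_nonneg_of_le
    (fun _ => norm_nonneg _) fun μ => ?_
  calc ‖(μ.map (weight z q)).prod‖ = (μ.map fun a => ‖weight z q a‖).prod := by
        simpa [Multiset.map_map] using map_multiset_prod (normHom : K →*₀ ℝ) (μ.map _)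
    _ ≤ (μ.map (weight ‖z‖ ‖q‖)).prod := Multiset.prod_map_le_prod_map₀ _ _
        (fun _ _ => norm_nonneg _) fun _ _ => norm_weight_le z q (hc.trans_le (hD _))

end NormedField

end Bracket

/-- For `|q| < 1/(1+|z|)`:
`1/{zq;q}_∞ = ∑_{λ ∈ 𝒫} z^{ℓ(λ)} q^{|λ|} / ∏_{i∈λ} {zq;q}_{i-1}`, the sum over all integer
partitions (multisets of positive integers, including the empty partition); here
`{zq;q}_∞ = (1-q-zq)/(1-q)`, so the sum equals `(1-q)/(1-q-zq)`. -/
theorem partition_expansion_inv (z q : ℂ) (h : ‖q‖ < 1 / (1 + ‖z‖)) :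
    HasSum
      (fun μ : Multiset ℕ+ =>
        z ^ Multiset.card μ * q ^ (μ.map fun i => (i : ℕ)).sum /
          (μ.map fun i => cbrk z q ((i : ℕ) - 1)).prod)
      ((1 - q) / (1 - q - z * q)) := by
  have hq : ‖q‖ < 1 := h.trans_le (div_le_one_of_le₀ (by simp) (by positivity))
  have hc : 0 < (1 - ‖q‖ - ‖z‖ * ‖q‖) / (1 - ‖q‖) := by
    rw [lt_div_iff₀ (by positivity)] at h
    exact div_pos (by linarith) (by linarith)
  have hD := sub_sub_mul_div_one_sub_le_bracket (norm_nonneg z) (norm_nonneg q) hq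
  have hsum := summable_norm_prod_map_weight hc hD
  have hprod := hasProd_inv_one_sub_tsum_prod_map (norm_weight_lt_one hc hD) hsum
  have htsum : ∑' μ : Multiset ℕ+, (μ.map (weight z q)).prod = (1 - q) / (1 - q - z * q) := by
    refine tendsto_nhds_unique ((hprod.comp tendsto_partsUpTo).congr fun N => ?_)
      (tendsto_inv_bracket hc hD hq)
    rw [Function.comp_apply, prod_partsUpTo, Finset.prod_inv_distrib,
      prod_one_sub_weight z q fun n _ => bracket_ne_zero hc hD n]
  rw [← htsum, cbrk_eq_bracket]
  simpa only [prod_map_weight] using hsum.of_norm.hasSum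
end

section
/- For complex numbers z and q with |q| < 1/(1+|z|), one has {zq;q}_∞ = ∑_{λ ∈ P*} (−z)^{ℓ(λ)} q^{|λ|} / ∏_{i∈λ} {zq;q}_{i−1}, where the sum is over all partitions λ into distinct parts (including the empty partition). -/
/-!
With `a_n = -z / {zq;q}_{n-1}` one has `1 + a_n q^n = {zq;q}_n / {zq;q}_{n-1}`, so the partial
products of `∏ (1 + a_n q^n)` telescope to `{zq;q}_n`, which tends to `{zq;q}_∞`. The hypothesis
`|q| < 1/(1+|z|)` keeps every `{zq;q}_n` at distance at least `1 - |z||q|/(1-|q|) > 0` from `0`,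
so `|a_n q^n|` is dominated by a geometric series. The product therefore converges absolutely and
can be expanded as the sum, over finite sets `λ` of positive integers, of `∏_{i∈λ} a_i q^i`.
-/

open Finset Filter Topology

theorem hasSum_finsetProd_of_tendsto_prod_range {R : Type*} [NormedCommRing R] [NormOneClass R]
    [CompleteSpace R] {f : ℕ → R} {a : R}
    (hf : Summable fun i : ℕ+ ↦ ‖f i‖)
    (h : Tendsto (fun n ↦ ∏ i ∈ range n, (1 + f (i + 1))) atTop (𝓝 a)) :
    HasSum (fun s : Finset ℕ+ ↦ ∏ i ∈ s, f i) a := by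
  have hs := (summable_finsetProd_of_summable_norm hf).hasSum
  have hp := hasProd_pnat_iff_hasProd_succ (f := (1 + f ·)).mp (hasProd_one_add_of_hasSum_prod hs)
  rwa [tendsto_nhds_unique hp.tendsto_prod_nat h] at hs

def Finset.equivNodupMultiset (α : Type*) : Finset α ≃ {s : Multiset α // s.Nodup} where
  toFun s := ⟨s.val, s.nodup⟩
  invFun s := ⟨s.val, s.property⟩

theorem cbrk_zero (z q : ℂ) : cbrk z q 0 = 1 := by simp [cbrk]

theorem cbrk_succ (z q : ℂ) (m : ℕ) : cbrk z q (m + 1) = cbrk z q m - z * q ^ (m + 1) := by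
  rw [cbrk, cbrk, sum_Icc_succ_top (Nat.le_add_left 1 m)]
  ring

theorem cbrk_eq_one_sub_sum_range (z q : ℂ) (m : ℕ) :
    cbrk z q m = 1 - ∑ i ∈ range m, z * q * q ^ i := by
  induction m with
  | zero => simp [cbrk_zero]
  | succ m ih => rw [cbrk_succ, ih, sum_range_succ]; ring

theorem tendsto_cbrk (z : ℂ) {q : ℂ} (hq : ‖q‖ < 1) :
    Tendsto (cbrk z q) atTop (𝓝 ((1 - q - z * q) / (1 - q))) := by
  have hq1 : 1 - q ≠ 0 := sub_ne_zero.mpr fun h ↦ by simp [← h] at hq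
  have hgeom := ((hasSum_geometric_of_norm_lt_one hq).mul_left (z * q)).tendsto_sum_nat
  convert tendsto_const_nhds.sub hgeom using 1
  · exact funext (cbrk_eq_one_sub_sum_range z q)
  · field_simp

theorem one_sub_le_norm_cbrk (z : ℂ) {q : ℂ} (hq : ‖q‖ < 1) (m : ℕ) :
    1 - ‖z‖ * ‖q‖ * (1 - ‖q‖)⁻¹ ≤ ‖cbrk z q m‖ := by
  have hgeom := (hasSum_geometric_of_lt_one (norm_nonneg q) hq).mul_left (‖z‖ * ‖q‖)
  have htail : ‖∑ i ∈ range m, z * q * q ^ i‖ ≤ ‖z‖ * ‖q‖ * (1 - ‖q‖)⁻¹ :=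
    calc ‖∑ i ∈ range m, z * q * q ^ i‖ ≤ ∑ i ∈ range m, ‖z‖ * ‖q‖ * ‖q‖ ^ i := by
          simpa only [norm_mul, norm_pow] using norm_sum_le (range m) (fun i ↦ z * q * q ^ i)
      _ ≤ ‖z‖ * ‖q‖ * (1 - ‖q‖)⁻¹ := sum_le_hasSum _ (fun i _ ↦ by positivity) hgeom
  rw [cbrk_eq_one_sub_sum_range]
  linarith [norm_sub_norm_le (1 : ℂ) (∑ i ∈ range m, z * q * q ^ i), norm_one (α := ℂ)]

noncomputable def cbrkFactor (z q : ℂ) (n : ℕ) : ℂ := -(z * q ^ n) / cbrk z q (n - 1)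

theorem prod_range_one_add_cbrkFactor {z q : ℂ} (hne : ∀ m, cbrk z q m ≠ 0) (n : ℕ) :
    ∏ i ∈ range n, (1 + cbrkFactor z q (i + 1)) = cbrk z q n := by
  induction n with
  | zero => simp [cbrk_zero]
  | succ n ih =>
    rw [prod_range_succ, ih, cbrkFactor, Nat.add_sub_cancel, cbrk_succ]
    field_simp [hne n]
    ring

theorem norm_cbrkFactor_le {z q : ℂ} {c : ℝ} (hc : 0 < c) (hcb : ∀ m, c ≤ ‖cbrk z q m‖) (n : ℕ) :
    ‖cbrkFactor z q n‖ ≤ ‖z‖ * ‖q‖ ^ n / c := by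
  rw [cbrkFactor, norm_div, norm_neg, norm_mul, norm_pow]
  exact div_le_div_of_nonneg_left (by positivity) hc (hcb _)

theorem prod_cbrkFactor {z q : ℂ} (s : Finset ℕ+) :
    ∏ i ∈ s, cbrkFactor z q i =
      (-z) ^ s.card * q ^ (∑ i ∈ s, (i : ℕ)) / ∏ i ∈ s, cbrk z q (i - 1) := by
  simp only [cbrkFactor, neg_mul_eq_neg_mul, prod_div_distrib, prod_mul_distrib, prod_const,
    prod_pow_eq_pow_sum]

/-- For `|q| < 1/(1+|z|)`:
`{zq;q}_∞ = ∑_{λ ∈ 𝒫*} (−z)^{ℓ(λ)} q^{|λ|} / ∏_{i∈λ} {zq;q}_{i-1}`, the sum over all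
partitions into distinct parts (including the empty partition), where
`{zq;q}_∞ = (1-q-zq)/(1-q)`. -/
theorem partition_expansion_distinct (z q : ℂ) (h : ‖q‖ < 1 / (1 + ‖z‖)) :
    HasSum
      (fun μ : {s : Multiset ℕ+ // s.Nodup} =>
        (-z) ^ Multiset.card (μ : Multiset ℕ+) *
          q ^ ((μ : Multiset ℕ+).map fun i => (i : ℕ)).sum /
          ((μ : Multiset ℕ+).map fun i => cbrk z q ((i : ℕ) - 1)).prod)
      ((1 - q - z * q) / (1 - q)) := by
  have hz : 0 < 1 + ‖z‖ := by positivity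
  have hqz : ‖q‖ * (1 + ‖z‖) < 1 := (lt_div_iff₀ hz).mp h
  have hq : ‖q‖ < 1 := by nlinarith [norm_nonneg z, norm_nonneg q]
  have hc : 0 < 1 - ‖z‖ * ‖q‖ * (1 - ‖q‖)⁻¹ := by
    rw [sub_pos, ← div_eq_mul_inv, div_lt_one (by linarith)]
    linarith
  have hcb := one_sub_le_norm_cbrk z hq
  have hne m : cbrk z q m ≠ 0 := norm_pos_iff.mp (hc.trans_le (hcb m))
  have hsum : Summable fun n ↦ ‖cbrkFactor z q n‖ :=
    .of_nonneg_of_le (fun _ ↦ norm_nonneg _) (norm_cbrkFactor_le hc hcb)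
      (((summable_geometric_of_lt_one (norm_nonneg q) hq).mul_left _).div_const _)
  have hprod := hasSum_finsetProd_of_tendsto_prod_range (summable_pnat_iff_summable_nat.mpr hsum)
    (by simpa only [prod_range_one_add_cbrkFactor hne] using tendsto_cbrk z hq)
  refine (Finset.equivNodupMultiset ℕ+).hasSum_iff.mp (hprod.congr_fun fun s ↦ ?_)
  rw [prod_cbrkFactor]
  simp [Finset.equivNodupMultiset]
end

section
/- For z, q ∈ ℂ with |q| < 1/(1+|z|), the identity 1 + ∑_{n≥1} z·q^n/{zq;q}_n = ∑ z^{ℓ(c)} q^{|c|} holds, where the right-hand sum is over all integer compositions c = (c_1,...,c_r) (including the empty one) whose first part c_1 equals the largest part of c. -/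
section ListGeometric

variable {α 𝕜 : Type*} [NormedField 𝕜] {w : α → 𝕜}

theorem summable_norm_prod_pi_fin (hw : Summable fun a => ‖w a‖) :
    ∀ n : ℕ, Summable fun f : Fin n → α => ‖∏ i, w (f i)‖
  | 0 => .of_finite
  | n + 1 => by
    rw [← (Fin.consEquiv fun _ => α).summable_iff]
    simpa [Function.comp_def, Fin.prod_univ_succ] using
      hw.mul_norm (summable_norm_prod_pi_fin hw n)

theorem hasSum_prod_pi_fin [CompleteSpace 𝕜] (hw : Summable fun a => ‖w a‖) :
    ∀ n : ℕ, HasSum (fun f : Fin n → α => ∏ i, w (f i)) ((∑' a, w a) ^ n)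
  | 0 => by simp
  | n + 1 => by
    have hn := summable_norm_prod_pi_fin hw n
    rw [← (Fin.consEquiv fun _ => α).hasSum_iff, pow_succ', ← (hasSum_prod_pi_fin hw n).tsum_eq,
      tsum_mul_tsum_of_summable_norm hw hn]
    simpa [Function.comp_def, Fin.prod_univ_succ] using (summable_mul_of_summable_norm hw hn).hasSum

theorem hasSum_list_prod_map [CompleteSpace 𝕜] (hw : Summable fun a => ‖w a‖)
    (hw1 : ∑' a, ‖w a‖ < 1) :
    HasSum (fun l : List α => (l.map w).prod) (1 - ∑' a, w a)⁻¹ := by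
  have hnorm (n : ℕ) : HasSum (fun f : Fin n → α => ‖∏ i, w (f i)‖) ((∑' a, ‖w a‖) ^ n) := by
    simpa [norm_prod] using hasSum_prod_pi_fin (w := fun a => ‖w a‖) (by simpa using hw) n
  have hsummable : Summable fun p : Σ n, Fin n → α => ∏ i, w (p.2 i) := by
    refine .of_norm <| (summable_sigma_of_nonneg fun _ => norm_nonneg _).2
      ⟨fun n => (hnorm n).summable, ?_⟩
    simpa only [(hnorm _).tsum_eq] using
      summable_geometric_of_lt_one (tsum_nonneg fun _ => norm_nonneg _) hw1
  have hgeom : HasSum (fun n => (∑' a, w a) ^ n) (1 - ∑' a, w a)⁻¹ :=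
    hasSum_geometric_of_norm_lt_one ((norm_tsum_le_tsum_norm hw).trans_lt hw1)
  have hsigma := hsummable.hasSum
  rw [← hgeom.unique (hsigma.sigma (hasSum_prod_pi_fin hw)),
    ← List.equivSigmaTuple.hasSum_iff] at hsigma
  simpa [Function.comp_def, List.equivSigmaTuple, Fin.prod_univ_fun_getElem] using hsigma

theorem summable_norm_list_prod_map (hw : Summable fun a => ‖w a‖) (hw1 : ∑' a, ‖w a‖ < 1) :
    Summable fun l : List α => ‖(l.map w).prod‖ := by
  simpa [List.norm_prod, Function.comp_def] using
    (hasSum_list_prod_map (w := fun a => ‖w a‖) (by simpa using hw) (by simpa using hw1)).summable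

theorem hasSum_list_prod_map_of_forall_mem [CompleteSpace 𝕜] (s : Set α)
    (hw : Summable fun a => ‖w a‖) (hw1 : ∑' a, ‖w a‖ < 1) :
    HasSum (fun l : {l : List α // ∀ a ∈ l, a ∈ s} => (l.1.map w).prod)
      (1 - ∑' a, s.indicator w a)⁻¹ := by
  have hle (a : α) : ‖s.indicator w a‖ ≤ ‖w a‖ := norm_indicator_le_norm_self w a
  have hs : Summable fun a => ‖s.indicator w a‖ := hw.of_nonneg_of_le (fun _ => norm_nonneg _) hle
  have hprod (l : List α) :
      (l.map (s.indicator w)).prod =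
        {l | ∀ a ∈ l, a ∈ s}.indicator (fun l => (l.map w).prod) l := by
    by_cases hl : ∀ a ∈ l, a ∈ s
    · rw [Set.indicator_of_mem (s := {l | ∀ a ∈ l, a ∈ s}) hl,
        List.map_congr_left fun a ha => Set.indicator_of_mem (hl a ha) w]
    · obtain ⟨a, ha, has⟩ := not_forall₂.1 hl
      rw [Set.indicator_of_notMem (s := {l | ∀ a ∈ l, a ∈ s}) hl, List.prod_eq_zero]
      exact List.mem_map.2 ⟨a, ha, Set.indicator_of_notMem has w⟩
  have := hasSum_list_prod_map hs ((hs.tsum_le_tsum hle hw).trans_lt hw1)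
  simp only [hprod] at this
  exact hasSum_subtype_iff_indicator.2 this

end ListGeometric

def firstLargestEquiv (α : Type*) [Preorder α] [Inhabited α] :
    {l : List α // ∀ a ∈ l, a ≤ l.headI} ≃ Unit ⊕ Σ m : α, {t : List α // ∀ a ∈ t, a ≤ m} where
  toFun
    | ⟨[], _⟩ => .inl ()
    | ⟨m :: t, h⟩ => .inr ⟨m, t, fun a ha => h a (List.mem_cons_of_mem m ha)⟩
  invFun
    | .inl _ => ⟨[], by simp⟩
    | .inr ⟨m, t, h⟩ => ⟨m :: t, List.forall_mem_cons.2 ⟨le_rfl, h⟩⟩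
  left_inv := by rintro ⟨_ | ⟨m, t⟩, h⟩ <;> rfl
  right_inv := by rintro (⟨⟩ | ⟨m, t, h⟩) <;> rfl

theorem hasSum_pow_pnat {K : Type*} [NormedDivisionRing K] {r : K} (hr : ‖r‖ < 1) :
    HasSum (fun p : ℕ+ => r ^ (p : ℕ)) (r * (1 - r)⁻¹) := by
  simpa [hasSum_pnat_iff_hasSum_succ, pow_succ'] using
    (hasSum_geometric_of_norm_lt_one hr).mul_left r

theorem tsum_indicator_Iic_pnat {M : Type*} [AddCommMonoid M] [TopologicalSpace M] (f : ℕ → M)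
    (m : ℕ+) :
    ∑' p : ℕ+, (Set.Iic m).indicator (fun p : ℕ+ => f p) p = ∑ i ∈ Finset.Icc 1 (m : ℕ), f i := by
  have (p : ℕ+) : (Set.Iic m).indicator (fun p : ℕ+ => f p) p =
      (Finset.Icc 1 (m : ℕ) : Set ℕ).indicator f p := by
    simp [Set.indicator_apply, ← PNat.coe_le_coe, Nat.one_le_iff_ne_zero]
  simp only [this]
  rw [sum_eq_tsum_indicator, PNat.coe_injective.tsum_eq]
  exact Set.support_indicator_subset.trans fun n hn => ⟨Nat.toPNat n (Finset.mem_Icc.1 hn).1, rfl⟩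

theorem pow_length_mul_pow_sum {M β : Type*} [CommMonoid M] (x y : M) (f : β → ℕ) (l : List β) :
    x ^ l.length * y ^ (l.map f).sum = (l.map fun b => x * y ^ f b).prod := by
  induction l with
  | nil => simp
  | cons b l ih =>
    rw [List.length_cons, List.map_cons, List.sum_cons, List.map_cons, List.prod_cons, ← ih,
      pow_succ', pow_add, mul_mul_mul_comm]

/-- For `|q| < 1/(1+|z|)`:  `1 + ∑_{n≥1} z q^n/{zq;q}_n = ∑ z^{ℓ(c)} q^{|c|}`, the right-hand
sum over integer compositions (including the empty one) whose first part is the largest part. -/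
theorem composition_first_part_largest (z q : ℂ) (h : ‖q‖ < 1 / (1 + ‖z‖)) :
    HasSum
      (fun c : {l : List ℕ+ // ∀ p ∈ l, p ≤ l.headI} =>
        z ^ (c : List ℕ+).length * q ^ ((c : List ℕ+).map fun p => (p : ℕ)).sum)
      (1 + ∑' n : ℕ, z * q ^ (n + 1) / cbrk z q (n + 1)) := by
  set w : ℕ+ → ℂ := fun p => z * q ^ (p : ℕ)
  have hq : ‖q‖ * (1 + ‖z‖) < 1 := (lt_div_iff₀ (by positivity)).1 h
  have hw : HasSum (fun p => ‖w p‖) (‖z‖ * (‖q‖ * (1 - ‖q‖)⁻¹)) := by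
    have hq1 : ‖‖q‖‖ < 1 := by rw [norm_norm]; nlinarith [norm_nonneg z, norm_nonneg q]
    simpa [w] using (hasSum_pow_pnat hq1).mul_left ‖z‖
  have hw1 : ∑' p, ‖w p‖ < 1 := by
    rw [hw.tsum_eq, ← mul_assoc, ← div_eq_mul_inv, div_lt_one (by nlinarith [norm_nonneg z])]
    linarith
  have hfiber (m : ℕ+) :
      HasSum (fun t : {t : List ℕ+ // ∀ p ∈ t, p ≤ m} => w m * (t.1.map w).prod)
        (z * q ^ (m : ℕ) / cbrk z q m) := by
    have := (hasSum_list_prod_map_of_forall_mem (Set.Iic m) hw.summable hw1).mul_left (w m)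
    rwa [tsum_indicator_Iic_pnat (fun i => z * q ^ i)] at this
  have hsummable : Summable fun c : {l : List ℕ+ // ∀ p ∈ l, p ≤ l.headI} => (c.1.map w).prod :=
    ((summable_norm_list_prod_map hw.summable hw1).subtype _).of_norm
  -- The coercion `List ℕ+ → List ℕ` in the statement elaborates through the list monad.
  simp only [List.pure_def, List.bind_eq_flatMap, List.map_id_fun', id_eq, ← List.map_eq_flatMap,
    pow_length_mul_pow_sum]
  rw [← (firstLargestEquiv ℕ+).symm.hasSum_iff]
  have hnonempty := (hsummable.comp_injective (firstLargestEquiv ℕ+).symm.injective).comp_injective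
    Sum.inr_injective
  refine .sum (hasSum_unique _) ?_
  rw [← tsum_pnat_eq_tsum_succ (f := fun n => z * q ^ n / cbrk z q n),
    (hnonempty.hasSum.sigma hfiber).tsum_eq]
  exact hnonempty.hasSum
end

section
/- For z, q ∈ ℂ with |q| < 1/(1+|z|), the identity 1 + ∑_{n≥1} z·q^n/(zq;q)_n = ∑_{λ ∈ P} z^{ℓ(λ)} q^{|λ|} holds, where (zq;q)_n = ∏_{k=0}^{n-1}(1 − z·q^{k+1}), and the right-hand sum is over all integer partitions λ including the empty partition. -/
/-!
Write `z ^ ℓ(λ) * q ^ |λ|` as the product of `z * q ^ i` over the parts `i` of `λ` and sort the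
partitions by their largest part. A partition with largest part `n + 1` is that part together with
an arbitrary multiset of parts `≤ n + 1`, so multiplying out geometric series gives the fibre sum
`z q ^ (n + 1) / (zq; q)_(n + 1)`; the empty partition contributes `1`. The same computation with
`‖z‖, ‖q‖` bounds the `n`-th fibre of norms by `‖z‖ (‖q‖ / (1 - ‖z‖ ‖q‖)) ^ (n + 1)`, a geometric
series precisely when `‖q‖ (1 + ‖z‖) < 1`, which gives absolute convergence.
-/

open Finset

theorem pow_card_mul_pow_sum_eq_prod_map {M α : Type*} [CommMonoid M] (a b : M) (g : α → ℕ)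
    (μ : Multiset α) :
    a ^ Multiset.card μ * b ^ (μ.map g).sum = (μ.map fun i => a * b ^ g i).prod := by
  induction μ using Multiset.induction_on with
  | empty => simp
  | cons i μ ih =>
    simp only [Multiset.card_cons, Multiset.map_cons, Multiset.sum_cons, Multiset.prod_cons, ← ih,
      pow_succ, pow_add]
    ac_rfl

def largestPart (μ : Multiset ℕ+) : ℕ := μ.toFinset.sup PNat.val

theorem largestPart_eq_zero_iff {μ : Multiset ℕ+} : largestPart μ = 0 ↔ μ = 0 := by
  simp [largestPart, Multiset.eq_zero_iff_forall_notMem]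

theorem le_largestPart {μ : Multiset ℕ+} {i : ℕ+} (hi : i ∈ μ) : (i : ℕ) ≤ largestPart μ :=
  le_sup (f := PNat.val) (Multiset.mem_toFinset.2 hi)

def consLargestPart (n : ℕ) (ν : Multiset (Fin (n + 1))) : Multiset ℕ+ :=
  n.succPNat ::ₘ ν.map fun i : Fin (n + 1) => (i : ℕ).succPNat

theorem consLargestPart_injective (n : ℕ) : Function.Injective (consLargestPart n) :=
  fun _ _ h => Multiset.map_injective (fun _ _ h => Fin.ext (Nat.succPNat_inj.1 h))
    ((Multiset.cons_inj_right n.succPNat).1 h)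

theorem largestPart_consLargestPart (n : ℕ) (ν : Multiset (Fin (n + 1))) :
    largestPart (consLargestPart n ν) = n + 1 := by
  classical
  simp only [largestPart, consLargestPart, Multiset.toFinset_cons, sup_insert, Nat.succPNat_coe]
  refine sup_eq_left.2 (Finset.sup_le fun i hi => ?_)
  obtain ⟨j, -, rfl⟩ := Multiset.mem_map.1 (Multiset.mem_toFinset.1 hi)
  simpa using j.isLt

theorem range_consLargestPart (n : ℕ) :
    Set.range (consLargestPart n) = largestPart ⁻¹' {n + 1} := by
  refine (Set.range_subset_iff.2 (largestPart_consLargestPart n)).antisymm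
    fun μ (hμ : largestPart μ = n + 1) => ?_
  have hne : μ.toFinset.Nonempty := by
    rw [Multiset.toFinset_nonempty]; rintro rfl; simp [largestPart] at hμ
  obtain ⟨N, hN, hNμ⟩ := exists_mem_eq_sup μ.toFinset hne PNat.val
  obtain rfl : N = n.succPNat := PNat.coe_injective (by simp [← hNμ, ← hμ, largestPart])
  refine ⟨(μ.erase n.succPNat).map fun i => Fin.ofNat (n + 1) i.natPred, ?_⟩
  rw [consLargestPart, Multiset.map_map]
  conv_rhs => rw [← Multiset.cons_erase (Multiset.mem_toFinset.1 hN)]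
  congr 1
  refine (Multiset.map_congr rfl fun i hi => ?_).trans (Multiset.map_id _)
  have hi : i.natPred < n + 1 := by
    have := le_largestPart (Multiset.mem_of_mem_erase hi)
    rw [PNat.natPred]; omega
  simp [Nat.mod_eq_of_lt hi]

theorem hasSum_prod_map_largestPart_eq_zero {R : Type*} [CommSemiring R] [TopologicalSpace R]
    (w : ℕ+ → R) :
    HasSum (fun μ : largestPart ⁻¹' {0} => ((μ : Multiset ℕ+).map w).prod) 1 := by
  have h0 : (0 : Multiset ℕ+) ∈ largestPart ⁻¹' {0} := largestPart_eq_zero_iff.2 rfl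
  convert hasSum_single ⟨0, h0⟩ fun μ hμ => (hμ (Subtype.ext (largestPart_eq_zero_iff.1 μ.2))).elim
  simp

theorem summable_mul_pow_mul_prod_inv {a b : ℝ} (ha : 0 ≤ a) (hb : 0 ≤ b) (hab : b + a * b < 1) :
    Summable fun n : ℕ => a * b ^ (n + 1) * ∏ i : Fin (n + 1), (1 - a * b ^ ((i : ℕ) + 1))⁻¹ := by
  have hab' : 0 < 1 - a * b := by nlinarith
  have hfactor (i : ℕ) : 1 - a * b ≤ 1 - a * b ^ (i + 1) := by
    have := mul_le_mul_of_nonneg_left (pow_le_of_le_one hb (by nlinarith) i.add_one_ne_zero) ha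
    linarith
  have hprod (n : ℕ) : ∏ i : Fin (n + 1), (1 - a * b ^ ((i : ℕ) + 1))⁻¹ ≤ (1 - a * b)⁻¹ ^ (n + 1) :=
    calc ∏ i : Fin (n + 1), (1 - a * b ^ ((i : ℕ) + 1))⁻¹ ≤ ∏ _i : Fin (n + 1), (1 - a * b)⁻¹ :=
          prod_le_prod (fun i _ => inv_nonneg.2 (hab'.trans_le (hfactor i)).le)
            fun i _ => inv_anti₀ hab' (hfactor i)
      _ = (1 - a * b)⁻¹ ^ (n + 1) := by simp
  have hr : b / (1 - a * b) < 1 := (div_lt_one hab').2 (by linarith)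
  refine .of_nonneg_of_le (fun n => ?_) (fun n => ?_)
    (((summable_nat_add_iff 1).2 (summable_geometric_of_lt_one (by positivity) hr)).mul_left a)
  · exact mul_nonneg (by positivity)
      (prod_nonneg fun i _ => inv_nonneg.2 (hab'.trans_le (hfactor i)).le)
  · calc a * b ^ (n + 1) * ∏ i : Fin (n + 1), (1 - a * b ^ ((i : ℕ) + 1))⁻¹
        ≤ a * b ^ (n + 1) * (1 - a * b)⁻¹ ^ (n + 1) := by gcongr; exact hprod n
      _ = a * (b / (1 - a * b)) ^ (n + 1) := by rw [div_eq_mul_inv, mul_pow, mul_assoc]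

section NormedField

variable {𝕜 : Type*} [NormedField 𝕜] [CompleteSpace 𝕜]

theorem summable_norm_and_hasSum_fin_prod {m : ℕ} (f : Fin m → ℕ → 𝕜)
    (hf : ∀ i, Summable fun n => ‖f i n‖) :
    (Summable fun v : Fin m → ℕ => ‖∏ i, f i (v i)‖) ∧
      HasSum (fun v : Fin m → ℕ => ∏ i, f i (v i)) (∏ i, ∑' n, f i n) := by
  induction m with
  | zero =>
    simp only [univ_eq_empty, prod_empty, norm_one]
    exact ⟨.of_finite, by simp⟩
  | succ m ih =>
    obtain ⟨ih_norm, ih⟩ := ih (fun i => f i.succ) fun i => hf i.succ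
    have hcons (p : ℕ × (Fin m → ℕ)) :
        ∏ i, f i (Fin.consEquiv (fun _ => ℕ) p i) = f 0 p.1 * ∏ i, f i.succ (p.2 i) := by
      simp [Fin.prod_univ_succ, Fin.consEquiv]
    rw [Fin.prod_univ_succ, ← (Fin.consEquiv fun _ => ℕ).summable_iff,
      ← (Fin.consEquiv fun _ => ℕ).hasSum_iff]
    simp only [Function.comp_def, hcons]
    have h0 := hf 0
    have hsum := summable_mul_of_summable_norm h0 ih_norm
    -- The ascriptions avoid unifying `?f x.1 * ?g x.2` against the goal, which times out.
    exact ⟨(h0.mul_norm ih_norm :), (h0.of_norm.hasSum.mul ih hsum :)⟩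

theorem hasSum_multiset_prod_map_fin {m : ℕ} (w : Fin m → 𝕜) (hw : ∀ i, ‖w i‖ < 1) :
    HasSum (fun ν : Multiset (Fin m) => (ν.map w).prod) (∏ i, (1 - w i)⁻¹) := by
  have hgeom := (summable_norm_and_hasSum_fin_prod (fun i n => w i ^ n) fun i => by
    simpa only [norm_pow] using summable_geometric_of_lt_one (norm_nonneg _) (hw i)).2
  simp only [tsum_geometric_of_norm_lt_one (hw _)] at hgeom
  rw [← (Multiset.toFinsupp.toEquiv.trans Finsupp.equivFunOnFinite).hasSum_iff] at hgeom
  convert hgeom using 2 with ν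
  classical
  simp only [Function.comp_apply, Equiv.trans_apply, Finsupp.equivFunOnFinite_apply,
    AddEquiv.toEquiv_eq_coe, AddEquiv.coe_toEquiv, Multiset.toFinsupp_apply,
    Finset.prod_multiset_map_count]
  exact prod_subset (subset_univ _) fun i _ hi => by simp [Multiset.count_eq_zero.2 (by simpa using hi)]

theorem hasSum_prod_map_largestPart_eq_succ (w : ℕ+ → 𝕜) (hw : ∀ i, ‖w i‖ < 1) (n : ℕ) :
    HasSum (fun μ : largestPart ⁻¹' {n + 1} => ((μ : Multiset ℕ+).map w).prod)
      (w n.succPNat * ∏ i : Fin (n + 1), (1 - w (i : ℕ).succPNat)⁻¹) := by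
  rw [← range_consLargestPart]
  refine ((consLargestPart_injective n).hasSum_range_iff (f := fun μ => (μ.map w).prod)).2 ?_
  have hcons : (fun μ => (μ.map w).prod) ∘ consLargestPart n =
      fun ν => w n.succPNat * (ν.map fun i : Fin (n + 1) => w (i : ℕ).succPNat).prod := by
    ext ν
    simp [consLargestPart, Multiset.map_map]
  rw [hcons]
  exact (hasSum_multiset_prod_map_fin _ fun i => hw _).mul_left _

variable {w : ℕ+ → 𝕜}

theorem hasSum_prod_map_of_summable (hw : ∀ i, ‖w i‖ < 1)
    (hs : Summable fun μ : Multiset ℕ+ => (μ.map w).prod) :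
    HasSum (fun μ : Multiset ℕ+ => (μ.map w).prod)
      (1 + ∑' n : ℕ, w n.succPNat * ∏ i : Fin (n + 1), (1 - w (i : ℕ).succPNat)⁻¹) := by
  have hfibers := (hasSum_nat_add_iff' 1).2 (hs.hasSum.tsum_fiberwise largestPart)
  simp only [range_one, sum_singleton, (hasSum_prod_map_largestPart_eq_zero w).tsum_eq,
    (hasSum_prod_map_largestPart_eq_succ w hw _).tsum_eq] at hfibers
  rw [hfibers.tsum_eq, add_sub_cancel]
  exact hs.hasSum

theorem summable_prod_map_of_summable_norm (hw : ∀ i, ‖w i‖ < 1)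
    (hs : Summable fun n : ℕ =>
      ‖w n.succPNat‖ * ∏ i : Fin (n + 1), (1 - ‖w (i : ℕ).succPNat‖)⁻¹) :
    Summable fun μ : Multiset ℕ+ => (μ.map w).prod := by
  have hw' : ∀ i, ‖‖w i‖‖ < 1 := by simpa using hw
  refine .of_norm ?_
  have hnorm (μ : Multiset ℕ+) : ‖(μ.map w).prod‖ = (μ.map fun i => ‖w i‖).prod := by
    simpa [Multiset.map_map] using map_multiset_prod (normHom : 𝕜 →*₀ ℝ) (μ.map w)
  simp only [hnorm]
  rw [summable_partition (fun μ => Multiset.prod_nonneg fun _ hx => by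
      obtain ⟨i, -, rfl⟩ := Multiset.mem_map.1 hx; exact norm_nonneg _)
    (s := fun n => largestPart ⁻¹' {n}) fun μ => ⟨_, rfl, fun _ h => h.symm⟩]
  refine ⟨fun n => ?_, ?_⟩
  · cases n with
    | zero => exact (hasSum_prod_map_largestPart_eq_zero _).summable
    | succ n => exact (hasSum_prod_map_largestPart_eq_succ _ hw' n).summable
  · rw [← summable_nat_add_iff 1]
    simpa only [(hasSum_prod_map_largestPart_eq_succ _ hw' _).tsum_eq] using hs

theorem hasSum_prod_map_mul_pow {z q : 𝕜} (h : ‖q‖ + ‖z‖ * ‖q‖ < 1) :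
    HasSum (fun μ : Multiset ℕ+ => (μ.map fun i : ℕ+ => z * q ^ (i : ℕ)).prod)
      (1 + ∑' n : ℕ, z * q ^ (n + 1) * ∏ i : Fin (n + 1), (1 - z * q ^ ((i : ℕ) + 1))⁻¹) := by
  have hq : ‖q‖ ≤ 1 := by nlinarith [norm_nonneg z, norm_nonneg q]
  have hw (i : ℕ+) : ‖z * q ^ (i : ℕ)‖ < 1 := by
    rw [norm_mul, norm_pow]
    calc ‖z‖ * ‖q‖ ^ (i : ℕ) ≤ ‖z‖ * ‖q‖ :=
          mul_le_mul_of_nonneg_left (pow_le_of_le_one (norm_nonneg q) hq i.ne_zero) (norm_nonneg z)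
      _ < 1 := by linarith [norm_nonneg q]
  have hs := summable_prod_map_of_summable_norm hw (by
    simpa [norm_mul, norm_pow] using summable_mul_pow_mul_prod_inv (norm_nonneg z) (norm_nonneg q) h)
  simpa using hasSum_prod_map_of_summable hw hs

end NormedField

/-- For `|q| < 1/(1+|z|)`:  `1 + ∑_{n≥1} z q^n/(zq;q)_n = ∑_{λ ∈ 𝒫} z^{ℓ(λ)} q^{|λ|}`, the
right-hand sum over all integer partitions (multisets of positive integers) including the
empty one, where `(zq;q)_n = ∏_{k=0}^{n-1}(1 - z q^{k+1})`. -/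
theorem partition_largest_part_gen (z q : ℂ) (h : ‖q‖ < 1 / (1 + ‖z‖)) :
    HasSum
      (fun μ : Multiset ℕ+ => z ^ Multiset.card μ * q ^ (μ.map fun i => (i : ℕ)).sum)
      (1 + ∑' n : ℕ, z * q ^ (n + 1) / ∏ k ∈ Finset.range (n + 1), (1 - z * q ^ (k + 1))) := by
  have hqz : ‖q‖ + ‖z‖ * ‖q‖ < 1 := by
    rw [lt_div_iff₀ (by positivity)] at h
    linarith
  have hterm (n : ℕ) : z * q ^ (n + 1) / ∏ k ∈ range (n + 1), (1 - z * q ^ (k + 1)) =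
      z * q ^ (n + 1) * ∏ i : Fin (n + 1), (1 - z * q ^ ((i : ℕ) + 1))⁻¹ := by
    rw [div_eq_mul_inv, ← prod_inv_distrib, ← Fin.prod_univ_eq_prod_range]
  -- `μ.map fun i => (i : ℕ)` elaborates as the monadic coercion `μ >>= pure ∘ (↑)`.
  simp only [hterm, Multiset.pure_def, Multiset.bind_def, Multiset.bind_singleton,
    Multiset.map_id', pow_card_mul_pow_sum_eq_prod_map]
  exact hasSum_prod_map_mul_pow hqz
end
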